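/- Suppose real numbers P^{US}, P^{AS}, P^{UI}, P^{AI}, q, u, v, γ with u,v,γ ∈ (0,1), q ∈ [0,1), satisfy the equilibrium system: P^{US} = P^{US}(1-v) + P^{AI}γu + P^{AS}qu; P^{AS} = P^{US}v + P^{AI}γ(1-u) + P^{AS}q(1-u); P^{UI} = P^{UI}(1-v) + P^{AI}(1-γ)u + P^{AS}(1-q)u; P^{AI} = P^{UI}v + P^{AI}(1-γ)(1-u) + P^{AS}(1-q)(1-u); and P^{US}+P^{AS}+P^{UI}+P^{AI} = 1. Then P^{AI} = (v/(u+v))·(1-q)/(1-q+γ), P^{UI} = (u/v)·P^{AI}, P^{AS} = (v/(u+v))·γ/(1-q+γ), and P^{US} = (u/v)·P^{AS}. -/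

import Mathlib

/-! The node's state is a pair (sleep/active, susceptible/infected). Adding the balance equations
of `US` and `AS` shows that among active nodes the flow `S → I` equals the flow `I → S`, and then
the equations of `US` and `UI` say that each sleeping state is balanced against its active twin.
So the sleep/active marginal is a two-state chain with rates `u, v`, giving `P^A = v / (u + v)`,
and the active mass splits as a two-state chain with rates `1 - q, γ`. -/

/-- A two-state chain in detailed balance: masses `x, y` with exit rates `a, b` and total `c`. -/
theorem two_state_balance {x y a b c : ℝ} (hab : a + b ≠ 0) (hflow : x * a = y * b)
    (hsum : x + y = c) : x = c * (b / (a + b)) ∧ y = c * (a / (a + b)) := by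
  constructor
  · field_simp
    linear_combination b * hsum + hflow
  · field_simp
    linear_combination a * hsum - hflow

theorem eq_div_mul_of_mul_eq {x y a b : ℝ} (ha : a ≠ 0) (h : x * a = y * b) : x = b / a * y := by
  field_simp
  linear_combination h

theorem persistence_equilibrium_general
    (u v γ q PUS PAS PUI PAI : ℝ)
    (hu : u ∈ Set.Ioo (0:ℝ) 1) (hv : v ∈ Set.Ioo (0:ℝ) 1)
    (hγ : γ ∈ Set.Ioo (0:ℝ) 1) (hq : q ∈ Set.Ico (0:ℝ) 1)
    (heq1 : PUS = PUS * (1 - v) + PAI * γ * u + PAS * q * u)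
    (heq2 : PAS = PUS * v + PAI * γ * (1 - u) + PAS * q * (1 - u))
    (heq3 : PUI = PUI * (1 - v) + PAI * (1 - γ) * u + PAS * (1 - q) * u)
    (hsum : PUS + PAS + PUI + PAI = 1) :
    PAI = (v / (u + v)) * ((1 - q) / (1 - q + γ)) ∧
    PUI = (u / v) * PAI ∧
    PAS = (v / (u + v)) * (γ / (1 - q + γ)) ∧
    PUS = (u / v) * PAS := by
  have hvne : v ≠ 0 := hv.1.ne'
  have infection_balance : PAS * (1 - q) = PAI * γ := by linear_combination heq1 + heq2
  have sleep_balance_S : PUS * v = PAS * u := by linear_combination heq1 - u * infection_balance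
  have sleep_balance_I : PUI * v = PAI * u := by linear_combination heq3 + u * infection_balance
  obtain ⟨hactive, -⟩ := two_state_balance
    (x := PAS + PAI) (y := PUS + PUI) (a := u) (b := v) (c := 1)
    (by linarith [hu.1, hv.1]) (by linear_combination -sleep_balance_S - sleep_balance_I)
    (by linear_combination hsum)
  obtain ⟨hAS, hAI⟩ := two_state_balance (by linarith [hγ.1, hq.2]) infection_balance
    (by rw [hactive, one_mul])
  exact ⟨hAI, eq_div_mul_of_mul_eq hvne sleep_balance_I, hAS,
    eq_div_mul_of_mul_eq hvne sleep_balance_S⟩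

/-- Epidemic-persistence equilibrium of the SIS model with sleep scheduling. -/
theorem persistence_equilibrium
    (u v γ q PUS PAS PUI PAI : ℝ)
    (hu : u ∈ Set.Ioo (0:ℝ) 1) (hv : v ∈ Set.Ioo (0:ℝ) 1)
    (hγ : γ ∈ Set.Ioo (0:ℝ) 1) (hq : q ∈ Set.Ico (0:ℝ) 1)
    (heq1 : PUS = PUS * (1 - v) + PAI * γ * u + PAS * q * u)
    (heq2 : PAS = PUS * v + PAI * γ * (1 - u) + PAS * q * (1 - u))
    (heq3 : PUI = PUI * (1 - v) + PAI * (1 - γ) * u + PAS * (1 - q) * u)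
    (heq4 : PAI = PUI * v + PAI * (1 - γ) * (1 - u) + PAS * (1 - q) * (1 - u))
    (hsum : PUS + PAS + PUI + PAI = 1) :
    PAI = (v / (u + v)) * ((1 - q) / (1 - q + γ)) ∧
    PUI = (u / v) * PAI ∧
    PAS = (v / (u + v)) * (γ / (1 - q + γ)) ∧
    PUS = (u / v) * PAS :=
  persistence_equilibrium_general u v γ q PUS PAS PUI PAI hu hv hγ hq heq1 heq2 heq3 hsum
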